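/- arXiv:2510.11814 — 6 statements merged into one kernel-verified Lean document; each statement's English description precedes it below -/
import Mathlib

section
/- Let F be a field of characteristic 0 and let a, b ∈ F with a ≠ 0. Then the polynomial Z₁₂ = 2a·X₁₂·X₂₂ − b·X₁₂² does not belong to the ideal I generated by X₁₁·X₂₂ − X₁₂·X₂₁ − 1. (Non-triviality of the relation z₁₂ = 0 used at ramified places in Proposition 5.7, Case 1.ii; membership in I would force a = 0, contradicting invertibility of [α_s]_dR.) -/
open MvPolynomial

/-! Variables: `X 0 = X₁₁`, `X 1 = X₁₂`, `X 2 = X₂₁`, `X 3 = X₂₂`.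
The `Z i j` below are the entries of `adj(Y)·M·Y` where `Y = (Xᵢⱼ)` is the generic
`2×2` matrix and `M = [[a, 0], [b, −a]]`. -/

/-- `Z₁₁ = a·X₁₁·X₂₂ − b·X₁₁·X₁₂ + a·X₁₂·X₂₁`. -/
noncomputable def Z11 (F : Type*) [Field F] (a b : F) : MvPolynomial (Fin 4) F :=
  C a * X 0 * X 3 - C b * X 0 * X 1 + C a * X 1 * X 2

/-- `Z₁₂ = 2a·X₁₂·X₂₂ − b·X₁₂²`. -/
noncomputable def Z12 (F : Type*) [Field F] (a b : F) : MvPolynomial (Fin 4) F :=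
  C (2 * a) * X 1 * X 3 - C b * X 1 ^ 2

/-- `Z₂₁ = b·X₁₁² − 2a·X₁₁·X₂₁`. -/
noncomputable def Z21 (F : Type*) [Field F] (a b : F) : MvPolynomial (Fin 4) F :=
  C b * X 0 ^ 2 - C (2 * a) * X 0 * X 2

/-- The defining ideal of `SL₂`: generated by `X₁₁·X₂₂ − X₁₂·X₂₁ − 1`. -/
noncomputable def sl2Ideal (F : Type*) [Field F] : Ideal (MvPolynomial (Fin 4) F) :=
  Ideal.span {X 0 * X 3 - X 1 * X 2 - 1}

/-- Non-triviality of the relation `z₁₂ = 0` at ramified places (Proposition 5.7,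
Case 1.ii): for `a b : F` with `a ≠ 0`, the polynomial `Z₁₂ = 2a·X₁₂·X₂₂ − b·X₁₂²`
does not lie in the ideal generated by `X₁₁·X₂₂ − X₁₂·X₂₁ − 1`. -/
theorem Z12_not_mem_sl2Ideal (F : Type*) [Field F] [CharZero F] (a b : F) (ha : a ≠ 0) :
    Z12 F a b ∉ sl2Ideal F := by
  intro h
  rw [sl2Ideal, Ideal.mem_span_singleton] at h
  obtain ⟨q, hq⟩ := h
  have h2a : (2 : F) * a ≠ 0 := mul_ne_zero two_ne_zero ha
  set t : F := (b + 2 * a) / (2 * a) with ht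
  have := congrArg (eval (![1, 1, t - 1, t] : Fin 4 → F)) hq
  simp [Z12] at this
  have ht2 : 2 * a * t = b + 2 * a := by
    rw [ht]; field_simp
  rw [ht2] at this
  exact h2a (by linear_combination this)
end

section
/- Let F be a field of characteristic 0 and let a, b, p, d₁₁, d₁₂ ∈ F with a ≠ 0 and p ≠ 0. Set W₁₁ := p·(Z₁₁ − d₁₁), Q₁₂ := Z₁₂ − p²·d₁₂, and Rd := d₁₂·Q₁₂² + 4·d₁₁·p²·Z₁₂²·Z₂₁ − 2·d₁₁·p·Z₁₂·W₁₁. If Rd belongs to the ideal I generated by X₁₁·X₂₂ − X₁₂·X₂₁ − 1, then d₁₁ = 0 and d₁₂ = 0. (Non-triviality of the ramified-place relation of Proposition 5.7, Case 1.i.a: membership in I forces d₁₁ = d₁₂ = 0, contradicting invertibility of [α_s]_v.) -/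
open MvPolynomial

/-! For `Y ∈ SL₂(F)` the values of `Z₁₁, Z₁₂, Z₂₁` at `Y` are entries of the conjugate
`Y⁻¹ M Y`, and `Rd` vanishes at every such `Y`. At `Y = 1` we have `Z₁₂ = 0`, so `Rd` reduces
to `p⁴ d₁₂³` and `d₁₂ = 0`. Two further points of `SL₂` give the conjugates
`[[± a, 2a], [0, ∓ a]]`, at which `Rd` becomes `∓ 4a p² d₁₁ (a ∓ d₁₁)`; adding the two
gives `8a p² d₁₁² = 0`. -/

theorem eval_eq_zero_of_mem_sl2Ideal {F : Type*} [Field F] {f : MvPolynomial (Fin 4) F}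
    (hf : f ∈ sl2Ideal F) {v : Fin 4 → F} (hv : v 0 * v 3 - v 1 * v 2 = 1) : eval v f = 0 := by
  obtain ⟨c, rfl⟩ := Ideal.mem_span_singleton'.mp hf
  simp [hv]

section

variable {F : Type*} [Field F] [CharZero F] {a : F} (b : F)

theorem exists_det_eq_one_eval_Z_eq (ha : a ≠ 0) : ∃ v : Fin 4 → F, v 0 * v 3 - v 1 * v 2 = 1 ∧
    eval v (Z11 F a b) = a ∧ eval v (Z12 F a b) = 2 * a ∧ eval v (Z21 F a b) = 0 := by
  refine ⟨![1, 1, b / (2 * a), 1 + b / (2 * a)], ?_, ?_, ?_, ?_⟩ <;>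
    simp [Z11, Z12, Z21] <;> field_simp <;> ring

theorem exists_det_eq_one_eval_Z_eq_neg (ha : a ≠ 0) : ∃ v : Fin 4 → F, v 0 * v 3 - v 1 * v 2 = 1 ∧
    eval v (Z11 F a b) = -a ∧ eval v (Z12 F a b) = 2 * a ∧ eval v (Z21 F a b) = 0 := by
  refine ⟨![0, 1, -1, 1 + b / (2 * a)], by simp, by simp [Z11], ?_, by simp [Z21]⟩
  simp [Z12]
  field_simp
  ring

end

/-- Non-triviality of the ramified-place relation of Proposition 5.7, Case 1.i.a:
with `W₁₁ := p·(Z₁₁ − d₁₁)`, `Q₁₂ := Z₁₂ − p²·d₁₂`, if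
`Rd := d₁₂·Q₁₂² + 4·d₁₁·p²·Z₁₂²·Z₂₁ − 2·d₁₁·p·Z₁₂·W₁₁` lies in the ideal generated
by `X₁₁·X₂₂ − X₁₂·X₂₁ − 1`, then `d₁₁ = 0` and `d₁₂ = 0`. -/
theorem ramified_case1ia (F : Type*) [Field F] [CharZero F] (a b p d11 d12 : F)
    (ha : a ≠ 0) (hp : p ≠ 0)
    (W11 : MvPolynomial (Fin 4) F) (hW11 : W11 = C p * (Z11 F a b - C d11))
    (Q12 : MvPolynomial (Fin 4) F) (hQ12 : Q12 = Z12 F a b - C (p ^ 2 * d12))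
    (Rd : MvPolynomial (Fin 4) F)
    (hRd : Rd = C d12 * Q12 ^ 2 + C (4 * d11 * p ^ 2) * Z12 F a b ^ 2 * Z21 F a b
      - C (2 * d11 * p) * Z12 F a b * W11)
    (hmem : Rd ∈ sl2Ideal F) :
    d11 = 0 ∧ d12 = 0 := by
  subst hRd hQ12 hW11
  have hRd_eval (v : Fin 4 → F) (hv : v 0 * v 3 - v 1 * v 2 = 1) :
      d12 * (eval v (Z12 F a b) - p ^ 2 * d12) ^ 2
        + 4 * d11 * p ^ 2 * eval v (Z12 F a b) ^ 2 * eval v (Z21 F a b)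
        - 2 * d11 * p * eval v (Z12 F a b) * (p * (eval v (Z11 F a b) - d11)) = 0 := by
    simpa using eval_eq_zero_of_mem_sl2Ideal hmem hv
  have hd12 : d12 = 0 := by
    have h := hRd_eval ![1, 0, 0, 1] (by simp)
    simpa [Z12, hp] using h
  subst hd12
  obtain ⟨v, hv, h₁₁, h₁₂, h₂₁⟩ := exists_det_eq_one_eval_Z_eq b ha
  obtain ⟨w, hw, h₁₁', h₁₂', h₂₁'⟩ := exists_det_eq_one_eval_Z_eq_neg b ha
  have h := hRd_eval v hv
  have h' := hRd_eval w hw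
  rw [h₁₁, h₁₂, h₂₁] at h
  rw [h₁₁', h₁₂', h₂₁'] at h'
  have hd11 : 8 * a * p ^ 2 * d11 ^ 2 = 0 := by linear_combination h + h'
  simpa [ha, hp] using hd11
end

section
/- Let F be a field of characteristic 0 and let a, b, p, d₁₂, d₂₁ ∈ F with a ≠ 0. Set A := d₁₂·d₂₁²·p² + d₁₂·p² + d₂₁²·Z₁₂. If A belongs to the ideal I generated by X₁₁·X₂₂ − X₁₂·X₂₁ − 1, then d₂₁ = 0. (Non-triviality of the ramified-place relation of Proposition 5.7, Case 1.i.b: membership in I forces d₂₁ = 0, contradicting the standing assumption d₂₁ ≠ 0 in that case.) -/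
open MvPolynomial

/-- Non-triviality of the ramified-place relation of Proposition 5.7, Case 1.i.b:
if `A := d₁₂·d₂₁²·p² + d₁₂·p² + d₂₁²·Z₁₂` lies in the ideal generated by
`X₁₁·X₂₂ − X₁₂·X₂₁ − 1`, then `d₂₁ = 0`. -/
theorem ramified_case1ib (F : Type*) [Field F] [CharZero F] (a b p d12 d21 : F)
    (ha : a ≠ 0)
    (A : MvPolynomial (Fin 4) F)
    (hA : A = C (d12 * d21 ^ 2 * p ^ 2) + C (d12 * p ^ 2) + C (d21 ^ 2) * Z12 F a b)
    (hmem : A ∈ sl2Ideal F) :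
    d21 = 0 := by
  -- Evaluate at points (1, t, 0, 1) on SL₂ for t = 0, 1, 2.
  have key : ∀ t : F, d12 * d21 ^ 2 * p ^ 2 + d12 * p ^ 2
      + d21 ^ 2 * (2 * a * t - b * t ^ 2) = 0 := by
    intro t
    obtain ⟨g, hg⟩ := Ideal.mem_span_singleton'.mp hmem
    have := congrArg (eval (![1, t, 0, 1] : Fin 4 → F)) hg.symm
    rw [hA] at this
    simpa [Z12, mul_comm, mul_assoc, mul_left_comm] using this
  have h0 := key 0
  have h1 := key 1
  have h2 := key 2
  simp only [mul_zero, zero_pow, mul_one, one_pow] at h0 h1 h2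
  have hb : d21 ^ 2 * b = 0 := by linear_combination h1 - h0/2 - h2/2
  have ha2 : d21 ^ 2 * (2 * a) = 0 := by linear_combination h1 - h0 + hb
  have : d21 ^ 2 = 0 := by
    rcases mul_eq_zero.mp ha2 with h | h
    · exact h
    · exact absurd h (mul_ne_zero two_ne_zero ha)
  exact pow_eq_zero_iff (n := 2) (by norm_num) |>.mp this
end

section
/- Let F be a field of characteristic 0 and let a, b, p, d₁₁, d₁₂, d₂₁ ∈ F with a ≠ 0, p ≠ 0, and d₂₁ ≠ 0. Set W₁₁ := p·(Z₁₁ − d₁₁), A := d₁₂·d₂₁²·p² + d₁₂·p² + d₂₁²·Z₁₂, B := 2·d₁₁·d₂₁·p·Z₁₂ − 2·d₁₂·d₂₁·p²·W₁₁, and R3 := d₂₁·B − 2·d₁₁·p·A. If R3 belongs to the ideal I generated by X₁₁·X₂₂ − X₁₂·X₂₁ − 1, then d₁₂ = 0. (First step of the non-triviality argument in Proposition 5.7, Case 1.i.c, for the relation A·B′ = B·A′.) -/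
open MvPolynomial

/-- First step of the non-triviality argument in Proposition 5.7, Case 1.i.c:
with `W₁₁ := p·(Z₁₁ − d₁₁)`, `A := d₁₂·d₂₁²·p² + d₁₂·p² + d₂₁²·Z₁₂`,
`B := 2·d₁₁·d₂₁·p·Z₁₂ − 2·d₁₂·d₂₁·p²·W₁₁` and `R3 := d₂₁·B − 2·d₁₁·p·A`,
if `R3` lies in the ideal generated by `X₁₁·X₂₂ − X₁₂·X₂₁ − 1`, then `d₁₂ = 0`. -/
theorem ramified_case1ic_first (F : Type*) [Field F] [CharZero F] (a b p d11 d12 d21 : F)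
    (ha : a ≠ 0) (hp : p ≠ 0) (hd21 : d21 ≠ 0)
    (W11 : MvPolynomial (Fin 4) F) (hW11 : W11 = C p * (Z11 F a b - C d11))
    (A : MvPolynomial (Fin 4) F)
    (hA : A = C (d12 * d21 ^ 2 * p ^ 2) + C (d12 * p ^ 2) + C (d21 ^ 2) * Z12 F a b)
    (B : MvPolynomial (Fin 4) F)
    (hB : B = C (2 * d11 * d21 * p) * Z12 F a b - C (2 * d12 * d21 * p ^ 2) * W11)
    (R3 : MvPolynomial (Fin 4) F)
    (hR3 : R3 = C d21 * B - C (2 * d11 * p) * A)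
    (hmem : R3 ∈ sl2Ideal F) :
    d12 = 0 := by
  rw [sl2Ideal, Ideal.mem_span_singleton] at hmem
  obtain ⟨q, hq⟩ := hmem
  subst hR3 hB hA hW11
  have h1 := congrArg (eval ![1, 0, 0, 1]) hq
  have h2 := congrArg (eval ![0, 1, -1, 1]) hq
  simp [Z11, Z12, eval_mul, eval_sub, eval_add] at h1 h2
  have key : d12 * (p ^ 3 * (a * d21 ^ 2)) = 0 := by linear_combination h2 / 4 - h1 / 4
  have hne := mul_ne_zero (pow_ne_zero 3 hp) (mul_ne_zero ha (pow_ne_zero 2 hd21))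
  exact (mul_eq_zero.mp key).resolve_right hne
end

section
/- Let F be a field of characteristic 0 and let a, b, p, d₁₁, d₂₁ ∈ F with p ≠ 0 and d₂₁ ≠ 0, and set d₁₂ := 0. Set W₁₁ := p·(Z₁₁ − d₁₁), Q₁₂ := Z₁₂ − p²·d₁₂ (= Z₁₂), A := d₁₂·d₂₁²·p² + d₁₂·p² + d₂₁²·Z₁₂ (= d₂₁²·Z₁₂), C := −2·d₁₁·p·W₁₁·Z₁₂ + d₂₁·Z₁₂² − p²·Z₁₂²·Z₂₁, and R4 := d₂₁·C − Q₁₂·A. If R4 belongs to the ideal I generated by X₁₁·X₂₂ − X₁₂·X₂₁ − 1, then a = 0 and b = 0. (Second step of the non-triviality argument in Proposition 5.7, Case 1.i.c, for the relation A·C′ = C·A′: with d₁₂ = 0 membership in I forces a = b = 0, contradicting invertibility of [α₀]_dR.) -/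
open MvPolynomial

/-- Second step of the non-triviality argument in Proposition 5.7, Case 1.i.c:
with `d₁₂ := 0`, `W₁₁ := p·(Z₁₁ − d₁₁)`, `Q₁₂ := Z₁₂ − p²·d₁₂ (= Z₁₂)`,
`A := d₁₂·d₂₁²·p² + d₁₂·p² + d₂₁²·Z₁₂ (= d₂₁²·Z₁₂)`,
`C' := −2·d₁₁·p·W₁₁·Z₁₂ + d₂₁·Z₁₂² − p²·Z₁₂²·Z₂₁` and `R4 := d₂₁·C' − Q₁₂·A`,
if `R4` lies in the ideal generated by `X₁₁·X₂₂ − X₁₂·X₂₁ − 1`, then `a = 0` and `b = 0`. -/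
theorem ramified_case1ic_second (F : Type*) [Field F] [CharZero F] (a b p d11 d21 d12 : F)
    (hp : p ≠ 0) (hd21 : d21 ≠ 0) (hd12 : d12 = 0)
    (W11 : MvPolynomial (Fin 4) F) (hW11 : W11 = C p * (Z11 F a b - C d11))
    (Q12 : MvPolynomial (Fin 4) F) (hQ12 : Q12 = Z12 F a b - C (p ^ 2 * d12))
    (A : MvPolynomial (Fin 4) F)
    (hA : A = C (d12 * d21 ^ 2 * p ^ 2) + C (d12 * p ^ 2) + C (d21 ^ 2) * Z12 F a b)
    (Cpoly : MvPolynomial (Fin 4) F)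
    (hC : Cpoly = -(C (2 * d11 * p) * W11 * Z12 F a b) + C d21 * Z12 F a b ^ 2
      - C (p ^ 2) * Z12 F a b ^ 2 * Z21 F a b)
    (R4 : MvPolynomial (Fin 4) F)
    (hR4 : R4 = C d21 * Cpoly - Q12 * A)
    (hmem : R4 ∈ sl2Ideal F) :
    a = 0 ∧ b = 0 := by
  subst hd12 hW11 hQ12 hA hC hR4
  rw [sl2Ideal] at hmem
  obtain ⟨q, hq⟩ := Ideal.mem_span_singleton'.mp hmem
  have key : ∀ s t : F,
      (2 * a * t * (1 + t * s) - b * t ^ 2) *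
        (2 * d11 * (a * (1 + t * s) - b * t + a * t * s - d11) +
          (2 * a * t * (1 + t * s) - b * t ^ 2) * (b - 2 * a * s)) = 0 := by
    intro s t
    have h0 := congrArg (MvPolynomial.eval ![(1:F), t, s, 1 + t * s]) hq
    simp [Z11, Z12, Z21] at h0
    have h2 : d21 * p ^ 2 *
        ((2 * a * t * (1 + t * s) - b * t ^ 2) *
          (2 * d11 * (a * (1 + t * s) - b * t + a * t * s - d11) +
            (2 * a * t * (1 + t * s) - b * t ^ 2) * (b - 2 * a * s))) = 0 := by
      linear_combination h0
    rcases mul_eq_zero.mp h2 with h | h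
    · exact absurd h (mul_ne_zero hd21 (pow_ne_zero 2 hp))
    · exact h
  have hb3 : b ^ 3 = 0 := by
    linear_combination (key 0 2 + key 0 (-2) - 4 * key 0 1 - 4 * key 0 (-1)) / 24
  have hb : b = 0 := pow_eq_zero_iff (by norm_num) |>.mp hb3
  subst hb
  have ha3 : a ^ 3 = 0 := by
    linear_combination -(key 2 1 - key (-2) 1 - 2 * key 1 1 + 2 * key (-1) 1) / 96
  exact ⟨pow_eq_zero_iff (by norm_num) |>.mp ha3, rfl⟩
end

section
/- Let F be a field of characteristic 0 and let a, b, p, d₁₁, d₁₂, d₂₁ ∈ F with a ≠ 0, p ≠ 0, and d₂₁ ≠ 0. Set W₁₁ := p·(Z₁₁ − d₁₁), Q₁₂ := Z₁₂ − p²·d₁₂, A := d₁₂·d₂₁²·p² + d₁₂·p² + d₂₁²·Z₁₂, B := 2·d₁₁·d₂₁·p·Z₁₂ − 2·d₁₂·d₂₁·p²·W₁₁, C := −2·d₁₁·p·W₁₁·Z₁₂ + d₂₁·Z₁₂² − p²·Z₁₂²·Z₂₁, R3 := d₂₁·B − 2·d₁₁·p·A, and R4 := d₂₁·C − Q₁₂·A.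 Then R3 and R4 do not both belong to the ideal I generated by X₁₁·X₂₂ − X₁₂·X₂₁ − 1; i.e., at least one of the two polynomials lies outside I. (This is the claim of Proposition 5.7, Case 1.i.c: at least one of the relations A·B′ = B·A′ and A·C′ = C·A′ is non-trivial.) -/
open MvPolynomial

/-! A polynomial in `sl2Ideal F` vanishes at every point of `SL₂(F)`.
If `d₁₂ ≠ 0`, then `R3 = −2·d₁₂·p³·(d₂₁²·Z₁₁ + d₁₁)`, a non-constant affine function of `Z₁₁`,
and `Z₁₁` takes the distinct values `a` and `−a` at `[[1,0],[0,1]]` and `[[0,1],[−1,0]]`.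
If `d₁₂ = 0`, then `R4 = −d₂₁·p²·Z₁₂·(2·d₁₁·(Z₁₁ − d₁₁) + Z₁₂·Z₂₁)`. Along the curve
`[[1,1],[t,t+1]]` in `SL₂(F)` this is a cubic in `t` with leading coefficient `8·a³·d₂₁·p²`,
so its third finite difference at `t = 0, 1, 2, 3` is nonzero. -/

section

variable {F : Type*} [Field F] {a b : F}

lemma eval_eq_zero_of_mem_sl2Ideal_s8 {x : Fin 4 → F} (hx : x 0 * x 3 - x 1 * x 2 = 1)
    {q : MvPolynomial (Fin 4) F} (hq : q ∈ sl2Ideal F) : eval x q = 0 := by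
  have hker : sl2Ideal F ≤ RingHom.ker (eval x) :=
    (Ideal.span_singleton_le_iff_mem _).2 (by simp [hx])
  exact hker hq

@[simp] lemma eval_Z11 (x : Fin 4 → F) :
    eval x (Z11 F a b) = a * x 0 * x 3 - b * x 0 * x 1 + a * x 1 * x 2 := by
  simp [Z11]

@[simp] lemma eval_Z12 (x : Fin 4 → F) :
    eval x (Z12 F a b) = 2 * a * x 1 * x 3 - b * x 1 ^ 2 := by
  simp [Z12]

@[simp] lemma eval_Z21 (x : Fin 4 → F) :
    eval x (Z21 F a b) = b * x 0 ^ 2 - 2 * a * x 0 * x 2 := by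
  simp [Z21]

lemma C_mul_Z11_add_C_notMem_sl2Ideal [NeZero (2 : F)] (ha : a ≠ 0) {c k : F} (hc : c ≠ 0) :
    C c * Z11 F a b + C k ∉ sl2Ideal F := by
  intro h
  have h₁ : c * a + k = 0 := by
    simpa using eval_eq_zero_of_mem_sl2Ideal_s8 (x := ![1, 0, 0, 1]) (by simp) h
  have h₂ : -(c * a) + k = 0 := by
    simpa using eval_eq_zero_of_mem_sl2Ideal_s8 (x := ![0, 1, -1, 0]) (by simp) h
  have : 2 * a * c = 0 := by linear_combination h₁ - h₂
  exact mul_ne_zero (mul_ne_zero two_ne_zero ha) hc this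

lemma C_mul_Z12_mul_notMem_sl2Ideal [CharZero F] (ha : a ≠ 0) {c : F} (hc : c ≠ 0) (k : F) :
    C c * Z12 F a b * (C (2 * k) * (Z11 F a b - C k) + Z12 F a b * Z21 F a b) ∉ sl2Ideal F := by
  intro h
  have hcurve (t : F) : c * (2 * a * (t + 1) - b) *
      (2 * k * (2 * a * t + a - b - k) + (2 * a * (t + 1) - b) * (b - 2 * a * t)) = 0 := by
    have := eval_eq_zero_of_mem_sl2Ideal_s8 (x := ![1, 1, t, t + 1]) (by simp) h
    simp only [map_mul, map_add, map_sub, eval_C, eval_Z11, eval_Z12, eval_Z21, Matrix.cons_val]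
      at this
    linear_combination this
  have : 48 * a ^ 3 * c = 0 := by
    linear_combination hcurve 0 - 3 * hcurve 1 + 3 * hcurve 2 - hcurve 3
  exact mul_ne_zero (mul_ne_zero (by norm_num) (pow_ne_zero 3 ha)) hc this

end

/-- Proposition 5.7, Case 1.i.c: with `W₁₁ := p·(Z₁₁ − d₁₁)`, `Q₁₂ := Z₁₂ − p²·d₁₂`,
`A := d₁₂·d₂₁²·p² + d₁₂·p² + d₂₁²·Z₁₂`, `B := 2·d₁₁·d₂₁·p·Z₁₂ − 2·d₁₂·d₂₁·p²·W₁₁`,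
`C' := −2·d₁₁·p·W₁₁·Z₁₂ + d₂₁·Z₁₂² − p²·Z₁₂²·Z₂₁`, `R3 := d₂₁·B − 2·d₁₁·p·A` and
`R4 := d₂₁·C' − Q₁₂·A`, the polynomials `R3` and `R4` do not both lie in the ideal
generated by `X₁₁·X₂₂ − X₁₂·X₂₁ − 1`. -/
theorem ramified_case1ic (F : Type*) [Field F] [CharZero F] (a b p d11 d12 d21 : F)
    (ha : a ≠ 0) (hp : p ≠ 0) (hd21 : d21 ≠ 0)
    (W11 : MvPolynomial (Fin 4) F) (hW11 : W11 = C p * (Z11 F a b - C d11))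
    (Q12 : MvPolynomial (Fin 4) F) (hQ12 : Q12 = Z12 F a b - C (p ^ 2 * d12))
    (A : MvPolynomial (Fin 4) F)
    (hA : A = C (d12 * d21 ^ 2 * p ^ 2) + C (d12 * p ^ 2) + C (d21 ^ 2) * Z12 F a b)
    (B : MvPolynomial (Fin 4) F)
    (hB : B = C (2 * d11 * d21 * p) * Z12 F a b - C (2 * d12 * d21 * p ^ 2) * W11)
    (Cpoly : MvPolynomial (Fin 4) F)
    (hC : Cpoly = -(C (2 * d11 * p) * W11 * Z12 F a b) + C d21 * Z12 F a b ^ 2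
      - C (p ^ 2) * Z12 F a b ^ 2 * Z21 F a b)
    (R3 : MvPolynomial (Fin 4) F)
    (hR3 : R3 = C d21 * B - C (2 * d11 * p) * A)
    (R4 : MvPolynomial (Fin 4) F)
    (hR4 : R4 = C d21 * Cpoly - Q12 * A) :
    ¬(R3 ∈ sl2Ideal F ∧ R4 ∈ sl2Ideal F) := by
  rintro ⟨hR3mem, hR4mem⟩
  by_cases hd12 : d12 = 0
  · have hR4_eq : R4 = C (-(d21 * p ^ 2)) * Z12 F a b *
        (C (2 * d11) * (Z11 F a b - C d11) + Z12 F a b * Z21 F a b) := by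
      subst_vars
      simp only [map_mul, map_pow, map_neg, map_ofNat, map_zero]
      ring
    exact C_mul_Z12_mul_notMem_sl2Ideal ha (by simp [hd21, hp]) d11 (hR4_eq ▸ hR4mem)
  · have hR3_eq :
        R3 = C (-2 * d12 * p ^ 3 * d21 ^ 2) * Z11 F a b + C (-2 * d12 * p ^ 3 * d11) := by
      subst_vars
      simp only [map_mul, map_pow, map_neg, map_ofNat]
      ring
    exact C_mul_Z11_add_C_notMem_sl2Ideal ha (by simp [hd12, hd21, hp]) (hR3_eq ▸ hR3mem)
end
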